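/- arXiv:1502.01975 — 2 statements merged into one kernel-verified Lean document; each statement's English description precedes it below -/
import Mathlib

section
/- If X ~ Poisson(λ) and Y ~ Poisson(μ) are independent with μ > λ > 0, then P(X ≥ Y) ≤ exp(-(√μ - √λ)²). -/
open Real

/-- Poisson probability mass function with mean `lam`. -/
noncomputable def ppmf (lam : ℝ) (k : ℕ) : ℝ :=
  Real.exp (-lam) * lam ^ k / (Nat.factorial k : ℝ)

lemma tsum_exp_div (x : ℝ) : (∑' n : ℕ, x ^ n / (Nat.factorial n : ℝ)) = Real.exp x := by
  rw [Real.exp_eq_exp_ℝ, NormedSpace.exp_eq_tsum_div]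

lemma ppmf_mul_pow (lam x : ℝ) (k : ℕ) :
    ppmf lam k * x ^ k = Real.exp (-lam) * ((lam * x) ^ k / (Nat.factorial k : ℝ)) := by
  unfold ppmf; rw [mul_pow]; ring

lemma summable_ppmf_pow (lam x : ℝ) : Summable (fun k : ℕ => ppmf lam k * x ^ k) := by
  simp only [ppmf_mul_pow]
  exact (Real.summable_pow_div_factorial (lam * x)).mul_left _

lemma tsum_ppmf_pow (lam x : ℝ) :
    (∑' k : ℕ, ppmf lam k * x ^ k) = Real.exp (lam * x - lam) := by
  simp only [ppmf_mul_pow]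
  rw [tsum_mul_left, tsum_exp_div, ← Real.exp_add]
  ring_nf

lemma ppmf_nonneg (lam : ℝ) (hl : 0 ≤ lam) (k : ℕ) : 0 ≤ ppmf lam k := by
  unfold ppmf
  positivity

/-- Poisson race Chernoff bound: for independent X ~ Poiss(λ), Y ~ Poiss(μ) with
μ > λ > 0, P(X ≥ Y) ≤ exp(-(√μ - √λ)²). -/
theorem poisson_race_upper (lam mu : ℝ) (h0 : 0 < lam) (hlm : lam < mu) :
    (∑' q : ℕ × ℕ, if q.2 ≤ q.1 then ppmf lam q.1 * ppmf mu q.2 else 0)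
      ≤ Real.exp (-(Real.sqrt mu - Real.sqrt lam) ^ 2) := by
  have hmu : 0 < mu := h0.trans hlm
  set s : ℝ := Real.sqrt mu / Real.sqrt lam with hs
  have hsl : 0 < Real.sqrt lam := Real.sqrt_pos.mpr h0
  have hsm : 0 < Real.sqrt mu := Real.sqrt_pos.mpr hmu
  have hspos : 0 < s := div_pos hsm hsl
  have hs1 : 1 ≤ s := (one_le_div hsl).mpr (Real.sqrt_le_sqrt hlm.le)
  -- dominating function
  set f : ℕ → ℝ := fun k => ppmf lam k * s ^ k with hf
  set g : ℕ → ℝ := fun k => ppmf mu k * s⁻¹ ^ k with hg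
  have hfs : Summable f := summable_ppmf_pow lam s
  have hgs : Summable g := summable_ppmf_pow mu s⁻¹
  have hfnn : ∀ k, 0 ≤ f k := fun k =>
    mul_nonneg (ppmf_nonneg lam h0.le k) (pow_nonneg hspos.le k)
  have hgnn : ∀ k, 0 ≤ g k := fun k =>
    mul_nonneg (ppmf_nonneg mu hmu.le k) (pow_nonneg (inv_nonneg.mpr hspos.le) k)
  have hFG : Summable (fun q : ℕ × ℕ => f q.1 * g q.2) :=
    Summable.mul_of_nonneg hfs hgs hfnn hgnn
  have hle : ∀ q : ℕ × ℕ,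
      (if q.2 ≤ q.1 then ppmf lam q.1 * ppmf mu q.2 else 0) ≤ f q.1 * g q.2 := by
    rintro ⟨n, m⟩
    dsimp only
    split_ifs with h
    · have h1 : (1 : ℝ) ≤ s ^ n * s⁻¹ ^ m := by
        rw [inv_pow, ← div_eq_mul_inv, le_div_iff₀ (pow_pos hspos m), one_mul]
        exact pow_le_pow_right₀ hs1 h
      have := mul_le_mul_of_nonneg_left h1
        (mul_nonneg (ppmf_nonneg lam h0.le n) (ppmf_nonneg mu hmu.le m))
      calc ppmf lam n * ppmf mu m = ppmf lam n * ppmf mu m * 1 := by ring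
        _ ≤ ppmf lam n * ppmf mu m * (s ^ n * s⁻¹ ^ m) := this
        _ = f n * g m := by rw [hf, hg]; ring
    · exact mul_nonneg (hfnn n) (hgnn m)
  have hsum : Summable (fun q : ℕ × ℕ => if q.2 ≤ q.1 then ppmf lam q.1 * ppmf mu q.2 else 0) := by
    apply Summable.of_nonneg_of_le _ hle hFG
    rintro ⟨n, m⟩
    dsimp only
    split_ifs with h
    · exact mul_nonneg (ppmf_nonneg lam h0.le n) (ppmf_nonneg mu hmu.le m)
    · exact le_refl 0
  have key : (∑' q : ℕ × ℕ, f q.1 * g q.2) = Real.exp (lam * s - lam) * Real.exp (mu * s⁻¹ - mu) := by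
    rw [Summable.tsum_prod hFG]
    have hginner : (∑' m : ℕ, g m) = Real.exp (mu * s⁻¹ - mu) := tsum_ppmf_pow mu s⁻¹
    calc (∑' (n : ℕ) (m : ℕ), f n * g m) = ∑' n : ℕ, f n * ∑' m : ℕ, g m := by
          congr 1; funext n; exact tsum_mul_left
      _ = (∑' n : ℕ, f n) * Real.exp (mu * s⁻¹ - mu) := by rw [hginner, tsum_mul_right]
      _ = _ := by rw [hf, tsum_ppmf_pow]
  have hexp : Real.exp (lam * s - lam) * Real.exp (mu * s⁻¹ - mu)
      = Real.exp (-(Real.sqrt mu - Real.sqrt lam) ^ 2) := by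
    rw [← Real.exp_add]
    congr 1
    have hl2 : Real.sqrt lam ^ 2 = lam := Real.sq_sqrt h0.le
    have hm2 : Real.sqrt mu ^ 2 = mu := Real.sq_sqrt hmu.le
    have h1 : lam * s = Real.sqrt lam * Real.sqrt mu := by
      rw [hs]; field_simp; nlinarith
    have h2 : mu * s⁻¹ = Real.sqrt lam * Real.sqrt mu := by
      rw [hs, inv_div]; field_simp; nlinarith
    rw [h1, h2]; nlinarith
  calc (∑' q : ℕ × ℕ, if q.2 ≤ q.1 then ppmf lam q.1 * ppmf mu q.2 else 0)
      ≤ ∑' q : ℕ × ℕ, f q.1 * g q.2 := Summable.tsum_le_tsum hle hsum hFG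
    _ = _ := key.trans hexp
end

section
/- For w ≥ 3, the rate-1/w convolutional code over F₂ with generator matrix g_w(z) = [1, 1+z, 1+z+z², …, 1+z+⋯+z^{w-1}] has free distance exactly 2w. -/
/-!
If `u` has at least two terms, so does every `v_r u`: its lowest and highest degrees are
`ntd u` and `r - 1 + deg u`, which differ. This gives weight at least `2w`. If `u = z^k` is a
monomial, the weight is `1 + 2 + ⋯ + w ≥ 2w` for `w ≥ 3`. Over `F₂` the bound is attained by
`u = 1 + z`, since `v_r (1 + z) = 1 + z^r`.
-/

open Polynomial Finset

/-- v_r(z) = 1 + z + ⋯ + z^{r-1} over F₂. -/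
noncomputable def vpoly (r : ℕ) : Polynomial (ZMod 2) :=
  ∑ i ∈ Finset.range r, Polynomial.X ^ i

namespace Polynomial

variable {R : Type*} [Semiring R] {p q : R[X]}

theorem one_lt_card_support_iff : 1 < #p.support ↔ p.natTrailingDegree < p.natDegree := by
  constructor
  · intro h
    obtain ⟨a, ha, b, hb, hab⟩ := Finset.one_lt_card.1 h
    have := natTrailingDegree_le_of_mem_supp a ha
    have := natTrailingDegree_le_of_mem_supp b hb
    have := le_natDegree_of_mem_supp a ha
    have := le_natDegree_of_mem_supp b hb
    omega
  · intro h
    have hp : p ≠ 0 := by rintro rfl; simp at h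
    exact Finset.one_lt_card.2 ⟨_, natTrailingDegree_mem_support_of_nonzero hp, _,
      natDegree_mem_support_of_nonzero hp, h.ne⟩

theorem one_lt_card_support_mul [NoZeroDivisors R] (hp : p ≠ 0) (hq : 1 < #q.support) :
    1 < #(p * q).support := by
  have hq0 : q ≠ 0 := by rintro rfl; simp at hq
  rw [one_lt_card_support_iff] at hq ⊢
  rw [natTrailingDegree_mul hp hq0, natDegree_mul hp hq0]
  have := natTrailingDegree_le_natDegree (p := p)
  omega

theorem support_mul_X_pow (p : R[X]) (k : ℕ) :
    (p * X ^ k).support = p.support.map (addRightEmbedding k) := by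
  ext n
  simp only [mem_support_iff, coeff_mul_X_pow', mem_map, addRightEmbedding_apply]
  constructor
  · intro h
    split_ifs at h with hk
    · exact ⟨n - k, h, by omega⟩
    · exact absurd rfl h
  · rintro ⟨m, hm, rfl⟩
    simpa using hm

theorem card_support_mul_X_pow (p : R[X]) (k : ℕ) : #(p * X ^ k).support = #p.support := by
  rw [support_mul_X_pow, card_map]

end Polynomial

theorem exists_eq_X_pow_of_card_support_eq_one {u : (ZMod 2)[X]} (h : #u.support = 1) :
    ∃ k, u = X ^ k := by
  obtain ⟨k, a, ha, rfl⟩ := card_support_eq_one.1 h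
  obtain rfl : a = 1 := by clear h; revert a; decide
  exact ⟨k, by rw [C_1, one_mul]⟩

theorem coeff_vpoly (r k : ℕ) : (vpoly r).coeff k = if k < r then 1 else 0 := by
  simp [vpoly, coeff_X_pow]

theorem support_vpoly (r : ℕ) : (vpoly r).support = range r := by
  ext k
  simp [mem_support_iff, coeff_vpoly]

theorem vpoly_ne_zero {r : ℕ} (hr : r ≠ 0) : vpoly r ≠ 0 := by
  rw [← support_nonempty, support_vpoly]
  exact nonempty_range_iff.2 hr

theorem card_support_vpoly_mul_X_pow (r k : ℕ) : #(vpoly r * X ^ k).support = r := by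
  rw [card_support_mul_X_pow, support_vpoly, card_range]

theorem vpoly_mul_X_add_one (r : ℕ) : vpoly r * (X + 1) = X ^ r + 1 := by
  have : (X + 1 : (ZMod 2)[X]) = X - 1 := by rw [sub_eq_add_neg, CharTwo.neg_eq]
  rw [this, vpoly, geom_sum_mul, sub_eq_add_neg, CharTwo.neg_eq]

theorem card_support_vpoly_mul_X_add_one {r : ℕ} (hr : r ≠ 0) :
    #(vpoly r * (X + 1)).support = 2 := by
  rw [vpoly_mul_X_add_one]
  simpa using card_support_binomial hr (x := (1 : ZMod 2)) (y := 1) one_ne_zero one_ne_zero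

theorem two_mul_le_sum_Icc_id {w : ℕ} (hw : 3 ≤ w) : 2 * w ≤ ∑ r ∈ Icc 1 w, r := by
  induction w, hw using Nat.le_induction with
  | base => decide
  | succ n hn ih => rw [sum_Icc_succ_top (by omega)]; omega

/-- For w ≥ 3, the rate-1/w convolutional code with generator [v₁, …, v_w] over F₂ has
free distance exactly 2w. -/
theorem free_distance_rate_inv_w (w : ℕ) (hw : 3 ≤ w) :
    (∀ u : Polynomial (ZMod 2), u ≠ 0 →
        2 * w ≤ ∑ r ∈ Finset.Icc 1 w, ((vpoly r) * u).support.card)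
    ∧ (∃ u : Polynomial (ZMod 2), u ≠ 0 ∧
        ∑ r ∈ Finset.Icc 1 w, ((vpoly r) * u).support.card = 2 * w) := by
  refine ⟨fun u hu => ?_, X + 1, X_add_C_ne_zero 1, ?_⟩
  · rcases (Nat.one_le_iff_ne_zero.2 (card_support_eq_zero.not.2 hu)).eq_or_lt with h | h
    · obtain ⟨k, rfl⟩ := exists_eq_X_pow_of_card_support_eq_one h.symm
      simpa only [card_support_vpoly_mul_X_pow] using two_mul_le_sum_Icc_id hw
    · calc 2 * w = ∑ _r ∈ Icc 1 w, 2 := by simp [mul_comm]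
        _ ≤ _ := sum_le_sum fun r hr =>
          one_lt_card_support_mul (vpoly_ne_zero (by grind)) h
  · rw [sum_congr rfl fun r hr => card_support_vpoly_mul_X_add_one (by grind)]
    simp [mul_comm]
end
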